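/- arXiv:1601.02864 — 6 statements merged into one kernel-verified Lean document; each statement's English description precedes it below -/
import Mathlib

section
/- Singleton bound: A_q(n,d;k) ≤ [n − d/2 + 1 choose k − d/2 + 1]_q, where d is even with 2 ≤ d ≤ 2k ≤ n. -/
open Module

/-- The subspace distance between two subspaces. -/
noncomputable def dS {K V : Type*} [Field K] [AddCommGroup V] [Module K V]
    (U W : Submodule K V) : ℕ :=
  finrank K ↥(U ⊔ W) - finrank K ↥(U ⊓ W)

/-- The injection distance between two subspaces. -/
noncomputable def dI {K V : Type*} [Field K] [AddCommGroup V] [Module K V]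
    (U W : Submodule K V) : ℕ :=
  max (finrank K ↥U) (finrank K ↥W) - finrank K ↥(U ⊓ W)

/-- `Acdc K V d k` is the maximum cardinality of a set of `k`-dimensional subspaces of `V`
with pairwise subspace distance at least `d` (a constant dimension code). -/
noncomputable def Acdc (K V : Type*) [Field K] [AddCommGroup V] [Module K V]
    (d k : ℕ) : ℕ :=
  sSup { m | ∃ C : Finset (Submodule K V),
    (∀ U ∈ C, finrank K ↥U = k) ∧
    (∀ U ∈ C, ∀ W ∈ C, U ≠ W → d ≤ dS U W) ∧ C.card = m }

/-- The Gaussian binomial coefficient `[n choose k]_q`. -/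
def gaussBinomial (q n k : ℕ) : ℕ :=
  (∏ i ∈ Finset.range k, (q ^ (n - i) - 1)) / (∏ i ∈ Finset.range k, (q ^ (i + 1) - 1))

/-! ### Auxiliary lemmas -/

section Aux

private lemma SB.exists_submodule_finrank_eq {K V : Type*} [Field K] [AddCommGroup V]
    [Module K V] [FiniteDimensional K V] {t : ℕ} (h : t ≤ finrank K V) :
    ∃ W : Submodule K V, finrank K ↥W = t := by
  have b := Module.finBasis K V
  have hli : LinearIndependent K (b ∘ Fin.castLE h) :=
    b.linearIndependent.comp _ (Fin.castLE_injective h)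
  exact ⟨Submodule.span K (Set.range (b ∘ Fin.castLE h)), by
    rw [finrank_span_eq_card hli, Fintype.card_fin]⟩

variable {K V : Type*} [Field K] [AddCommGroup V] [Module K V] [Fintype K] [Finite V]

private noncomputable def SB.spanFn (t : ℕ) :
    {s : Fin t → V // LinearIndependent K s} → {W : Submodule K V // finrank K ↥W = t} :=
  fun s => ⟨Submodule.span K (Set.range s.1),
    (finrank_span_eq_card s.2).trans (Fintype.card_fin t)⟩

/-- Tuples spanning `W` are equivalent to independent tuples in `W`. -/
private noncomputable def SB.fiberEquiv (t : ℕ) (W : {W : Submodule K V // finrank K ↥W = t}) :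
    {s : {s : Fin t → V // LinearIndependent K s} // SB.spanFn t s = W} ≃
    {s : Fin t → ↥W.1 // LinearIndependent K s} where
  toFun s := by
    have hmem : ∀ i, s.1.1 i ∈ W.1 := by
      intro i
      have h1 : s.1.1 i ∈ Submodule.span K (Set.range s.1.1) :=
        Submodule.subset_span (Set.mem_range_self i)
      have hW : Submodule.span K (Set.range s.1.1) = W.1 := congrArg Subtype.val s.2
      exact hW ▸ h1
    refine ⟨fun i => ⟨s.1.1 i, hmem i⟩, ?_⟩
    have hc : W.1.subtype ∘ (fun i => (⟨s.1.1 i, hmem i⟩ : ↥W.1)) = s.1.1 := rfl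
    exact LinearIndependent.of_comp W.1.subtype (by rw [hc]; exact s.1.2)
  invFun s := ⟨⟨W.1.subtype ∘ s.1, s.2.map' W.1.subtype (Submodule.ker_subtype _)⟩, by
    apply Subtype.ext
    show Submodule.span K (Set.range (W.1.subtype ∘ s.1)) = W.1
    rw [Set.range_comp, Submodule.span_image, s.2.span_eq_top_of_card_eq_finrank'
      (by simp [W.2]), Submodule.map_top, Submodule.range_subtype]⟩
  left_inv s := by ext i; rfl
  right_inv s := by ext i; rfl

attribute [local instance] Fintype.ofFinite

private lemma SB.card_subspaces_mul (t : ℕ) (ht : t ≤ finrank K V) :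
    Nat.card {W : Submodule K V // finrank K ↥W = t} *
      ∏ i : Fin t, (Fintype.card K ^ t - Fintype.card K ^ i.1) =
    ∏ i : Fin t, (Fintype.card K ^ finrank K V - Fintype.card K ^ i.1) := by
  classical
  rw [← card_linearIndependent (K := K) (V := V) ht]
  simp only [Nat.card_eq_fintype_card]
  rw [Fintype.card_congr (Equiv.sigmaFiberEquiv (SB.spanFn t)).symm, Fintype.card_sigma]
  have hfib : ∀ W : {W : Submodule K V // finrank K ↥W = t},
      Fintype.card {s // SB.spanFn t s = W} =
        ∏ i : Fin t, (Fintype.card K ^ t - Fintype.card K ^ i.1) := by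
    intro W
    rw [Fintype.card_congr (SB.fiberEquiv t W)]
    rw [← Nat.card_eq_fintype_card, card_linearIndependent (le_of_eq W.2.symm), W.2]
  rw [Finset.sum_congr rfl fun W _ => hfib W, Finset.sum_const, Finset.card_univ, smul_eq_mul]

private lemma SB.prod_pow_sub_split {q t r : ℕ} (htr : t ≤ r) :
    ∏ i ∈ Finset.range t, (q ^ r - q ^ i) =
      (∏ i ∈ Finset.range t, q ^ i) * ∏ i ∈ Finset.range t, (q ^ (r - i) - 1) := by
  rw [← Finset.prod_mul_distrib]
  refine Finset.prod_congr rfl fun i hi => ?_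
  have hir : i ≤ r := le_trans (le_of_lt (Finset.mem_range.mp hi)) htr
  rw [mul_comm, Nat.sub_mul, one_mul, ← pow_add, Nat.sub_add_cancel hir]

private lemma SB.eq_gaussBinomial_of_mul {q m t N : ℕ} (hq : 2 ≤ q) (htm : t ≤ m)
    (h : N * ∏ i ∈ Finset.range t, (q ^ t - q ^ i) = ∏ i ∈ Finset.range t, (q ^ m - q ^ i)) :
    N = gaussBinomial q m t := by
  have hrefl : ∏ i ∈ Finset.range t, (q ^ (t - i) - 1) =
      ∏ i ∈ Finset.range t, (q ^ (i + 1) - 1) := by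
    rw [← Finset.prod_range_reflect (fun i => q ^ (i + 1) - 1) t]
    refine Finset.prod_congr rfl fun i hi => ?_
    have : i < t := Finset.mem_range.mp hi
    congr 2
    omega
  rw [SB.prod_pow_sub_split htm, SB.prod_pow_sub_split (le_refl t), hrefl] at h
  have hQ : 0 < ∏ i ∈ Finset.range t, q ^ i :=
    Finset.prod_pos fun i _ => pow_pos (by omega) i
  have hP : 0 < ∏ i ∈ Finset.range t, (q ^ (i + 1) - 1) := by
    refine Finset.prod_pos fun i _ => ?_
    have : 2 ≤ q ^ (i + 1) := le_trans hq (Nat.le_self_pow (Nat.succ_ne_zero i) q)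
    omega
  have h2 : N * ∏ i ∈ Finset.range t, (q ^ (i + 1) - 1) =
      ∏ i ∈ Finset.range t, (q ^ (m - i) - 1) := by
    apply Nat.eq_of_mul_eq_mul_left hQ
    calc (∏ i ∈ Finset.range t, q ^ i) * (N * ∏ i ∈ Finset.range t, (q ^ (i + 1) - 1))
        = N * ((∏ i ∈ Finset.range t, q ^ i) * ∏ i ∈ Finset.range t, (q ^ (i + 1) - 1)) := by
          ring
      _ = (∏ i ∈ Finset.range t, q ^ i) * ∏ i ∈ Finset.range t, (q ^ (m - i) - 1) := h
  rw [gaussBinomial, ← h2, Nat.mul_div_cancel _ hP]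

/-- The number of `t`-dimensional subspaces of an `m`-dimensional space over a finite
field with `q` elements is the Gaussian binomial coefficient `[m choose t]_q`. -/
private lemma SB.card_subspaces (t : ℕ) (ht : t ≤ finrank K V) :
    Nat.card {W : Submodule K V // finrank K ↥W = t} =
      gaussBinomial (Fintype.card K) (finrank K V) t := by
  refine SB.eq_gaussBinomial_of_mul Fintype.one_lt_card ht ?_
  have := SB.card_subspaces_mul (K := K) (V := V) t ht
  rw [← Fin.prod_univ_eq_prod_range (fun i => Fintype.card K ^ t - Fintype.card K ^ i) t,
    ← Fin.prod_univ_eq_prod_range (fun i => Fintype.card K ^ finrank K V - Fintype.card K ^ i) t]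
  exact this

/-- The key counting argument, for an abstract finite vector space. -/
private lemma SB.card_code_le {n d k : ℕ} (hrank : finrank K V = n)
    (hde : Even d) (hd2 : 2 ≤ d) (hdk : d ≤ 2 * k) (hkn : 2 * k ≤ n)
    (C : Finset (Submodule K V)) (hCk : ∀ U ∈ C, finrank K ↥U = k)
    (hCd : ∀ U ∈ C, ∀ W ∈ C, U ≠ W → d ≤ dS U W) :
    C.card ≤ gaussBinomial (Fintype.card K) (n - d / 2 + 1) (k - d / 2 + 1) := by
  classical
  set c := d / 2 with hc
  have hdc : d = 2 * c := (Nat.two_mul_div_two_of_even hde).symm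
  have hc1 : 1 ≤ c := by omega
  have hck : c ≤ k := by omega
  have hkn' : k ≤ n := by omega
  set t := k - c + 1 with hT
  set m := n - c + 1 with hM
  have htm : t ≤ m := by omega
  have hmn : m ≤ n := by omega
  -- choose an ambient subspace H of dimension m
  obtain ⟨H, hH⟩ := SB.exists_submodule_finrank_eq (K := K) (V := V)
    (t := m) (le_trans hmn (le_of_eq hrank.symm))
  -- for each codeword U ∈ C, find a t-dimensional subspace of U ⊓ H
  have hUH : ∀ U ∈ C, t ≤ finrank K ↥(U ⊓ H) := by
    intro U hU
    have hsum := Submodule.finrank_sup_add_finrank_inf_eq U H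
    have hle : finrank K ↥(U ⊔ H) ≤ n :=
      le_trans (Submodule.finrank_le _) (le_of_eq hrank)
    rw [hCk U hU, hH] at hsum
    omega
  -- choose, for each U ∈ C, a t-dimensional subspace T U ≤ U ⊓ H
  have hchoice : ∀ U : {U // U ∈ C}, ∃ T : Submodule K V,
      T ≤ U.1 ⊓ H ∧ finrank K ↥T = t := by
    rintro ⟨U, hU⟩
    obtain ⟨S, hS⟩ := SB.exists_submodule_finrank_eq (K := K) (V := ↥(U ⊓ H))
      (t := t) (hUH U hU)
    refine ⟨S.map (U ⊓ H).subtype, Submodule.map_subtype_le _ _, ?_⟩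
    rw [Submodule.finrank_map_subtype_eq, hS]
  choose T hT1 hT2 using hchoice
  -- map each codeword to a t-dimensional subspace of H
  have hTH : ∀ U : {U // U ∈ C}, T U ≤ H := fun U => le_trans (hT1 U) inf_le_right
  have hTU : ∀ U : {U // U ∈ C}, T U ≤ U.1 := fun U => le_trans (hT1 U) inf_le_left
  let F : {U // U ∈ C} → {W : Submodule K ↥H // finrank K ↥W = t} := fun U =>
    ⟨(T U).comap H.subtype, by
      rw [(Submodule.comapSubtypeEquivOfLe (hTH U)).finrank_eq]; exact hT2 U⟩
  have hFinj : Function.Injective F := by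
    intro U U' hFE
    have hcomap : (T U).comap H.subtype = (T U').comap H.subtype := congrArg Subtype.val hFE
    have hmap := congrArg (Submodule.map H.subtype) hcomap
    rw [Submodule.map_comap_subtype, Submodule.map_comap_subtype,
      inf_eq_right.mpr (hTH U), inf_eq_right.mpr (hTH U')] at hmap
    -- so T U = T U'; deduce U = U'
    by_contra hne
    have hne' : U.1 ≠ U'.1 := fun h => hne (Subtype.ext h)
    have hd := hCd U.1 U.2 U'.1 U'.2 hne'
    have hTle : T U ≤ U.1 ⊓ U'.1 := le_inf (hTU U) (hmap ▸ hTU U')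
    have hfle : t ≤ finrank K ↥(U.1 ⊓ U'.1) := by
      rw [← hT2 U]
      exact Submodule.finrank_mono hTle
    have hsum := Submodule.finrank_sup_add_finrank_inf_eq U.1 U'.1
    rw [hCk U.1 U.2, hCk U'.1 U'.2] at hsum
    rw [dS] at hd
    omega
  -- conclude by counting
  have hcard : C.card ≤ Nat.card {W : Submodule K ↥H // finrank K ↥W = t} := by
    have := Nat.card_le_card_of_injective F hFinj
    rwa [Nat.card_eq_fintype_card, Fintype.card_coe] at this
  rwa [SB.card_subspaces t (by rw [hH]; exact htm), hH] at hcard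

end Aux

/-- Singleton bound: `A_q(n,d;k) ≤ [n − d/2 + 1 choose k − d/2 + 1]_q`. -/
theorem Acdc_singleton_bound {K : Type*} [Field K] [Fintype K] {n d k : ℕ}
    (hde : Even d) (hd2 : 2 ≤ d) (hdk : d ≤ 2 * k) (hkn : 2 * k ≤ n) :
    Acdc K (Fin n → K) d k ≤
      gaussBinomial (Fintype.card K) (n - d / 2 + 1) (k - d / 2 + 1) := by
  classical
  refine csSup_le ⟨0, ⟨∅, by simp⟩⟩ ?_
  rintro x ⟨C, hCk, hCd, rfl⟩
  exact SB.card_code_le (by simp) hde hd2 hdk hkn C hCk hCd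
end

section
/- Johnson-type bound: A_q(n,d;k) ≤ floor( (q^n − 1)·A_q(n−1,d;k−1) / (q^k − 1) ) for 1 ≤ k ≤ n and even d. -/
open Module

section Aux

variable {K V W : Type*} [Field K] [AddCommGroup V] [Module K V]
  [AddCommGroup W] [Module K W]

def acdcSet (K V : Type*) [Field K] [AddCommGroup V] [Module K V] (d k : ℕ) : Set ℕ :=
  { m | ∃ C : Finset (Submodule K V),
    (∀ U ∈ C, finrank K ↥U = k) ∧
    (∀ U ∈ C, ∀ W ∈ C, U ≠ W → d ≤ dS U W) ∧ C.card = m }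

lemma acdcSet_bddAbove (K V : Type*) [Field K] [AddCommGroup V] [Module K V] [Finite V]
    (d k : ℕ) : BddAbove (acdcSet K V d k) := by
  have h1 : Finite (Submodule K V) :=
    Finite.of_injective (fun U => (U : Set V)) SetLike.coe_injective
  have := Fintype.ofFinite (Submodule K V)
  refine ⟨Fintype.card (Submodule K V), ?_⟩
  rintro m ⟨C, -, -, rfl⟩
  exact Finset.card_le_univ C

lemma card_le_sSup_acdcSet [Finite V] {d k : ℕ}
    (C : Finset (Submodule K V)) (h1 : ∀ U ∈ C, finrank K ↥U = k)
    (h2 : ∀ U ∈ C, ∀ W ∈ C, U ≠ W → d ≤ dS U W) :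
    C.card ≤ sSup (acdcSet K V d k) :=
  le_csSup (acdcSet_bddAbove K V d k) ⟨C, h1, h2, rfl⟩

lemma acdcSet_subset (e : V ≃ₗ[K] W) (d k : ℕ) :
    acdcSet K V d k ⊆ acdcSet K W d k := by
  classical
  rintro m ⟨C, hdim, hdist, rfl⟩
  have hinj : Function.Injective (Submodule.map (e : V →ₗ[K] W)) :=
    Submodule.map_injective_of_injective e.injective
  refine ⟨C.image (Submodule.map (e : V →ₗ[K] W)), ?_, ?_, ?_⟩
  · rintro U hU
    rw [Finset.mem_image] at hU
    obtain ⟨u, hu, rfl⟩ := hU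
    rw [LinearEquiv.finrank_map_eq]
    exact hdim u hu
  · rintro U hU W hW hne
    rw [Finset.mem_image] at hU hW
    obtain ⟨u, hu, rfl⟩ := hU
    obtain ⟨w, hw, rfl⟩ := hW
    have huw : u ≠ w := fun h => hne (by rw [h])
    have : dS (u.map (e : V →ₗ[K] W)) (w.map (e : V →ₗ[K] W)) = dS u w := by
      rw [dS, dS, ← Submodule.map_sup, ← Submodule.map_inf (e : V →ₗ[K] W) e.injective,
        LinearEquiv.finrank_map_eq, LinearEquiv.finrank_map_eq]
    rw [this]
    exact hdist u hu w hw huw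
  · exact Finset.card_image_of_injective _ hinj

lemma acdcSet_congr (e : V ≃ₗ[K] W) (d k : ℕ) :
    acdcSet K V d k = acdcSet K W d k :=
  subset_antisymm (acdcSet_subset e d k) (acdcSet_subset e.symm d k)

end Aux

section Quot

variable {K V : Type*} [Field K] [AddCommGroup V] [Module K V]

lemma finrank_map_mkQ [FiniteDimensional K V] {P U : Submodule K V} (h : P ≤ U) :
    finrank K ↥(U.map P.mkQ) + finrank K ↥P = finrank K ↥U := by
  have h1 := LinearMap.finrank_range_add_finrank_ker (P.mkQ ∘ₗ U.subtype)
  rw [LinearMap.range_comp, Submodule.range_subtype, LinearMap.ker_comp,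
    Submodule.ker_mkQ, (Submodule.comapSubtypeEquivOfLe h).finrank_eq] at h1
  exact h1

lemma map_mkQ_inf {P U W : Submodule K V} (hU : P ≤ U) (hW : P ≤ W) :
    (U ⊓ W).map P.mkQ = U.map P.mkQ ⊓ W.map P.mkQ := by
  have hs : Function.Surjective P.mkQ := P.mkQ_surjective
  have : ((U.map P.mkQ ⊓ W.map P.mkQ).comap P.mkQ).map P.mkQ
      = U.map P.mkQ ⊓ W.map P.mkQ := Submodule.map_comap_eq_of_surjective hs _
  rw [← this, Submodule.comap_inf, Submodule.comap_map_eq, Submodule.comap_map_eq,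
    Submodule.ker_mkQ, sup_eq_left.mpr hU, sup_eq_left.mpr hW]

lemma dS_map_mkQ [FiniteDimensional K V] {P U W : Submodule K V} (hU : P ≤ U) (hW : P ≤ W) :
    dS (U.map P.mkQ) (W.map P.mkQ) = dS U W := by
  have h1 := finrank_map_mkQ (K := K) (le_trans hU le_sup_left : P ≤ U ⊔ W)
  have h2 := finrank_map_mkQ (K := K) (le_inf hU hW)
  have h3 : finrank K ↥P ≤ finrank K ↥(U ⊓ W) := Submodule.finrank_mono (le_inf hU hW)
  rw [dS, dS, ← Submodule.map_sup, ← map_mkQ_inf hU hW]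
  omega

lemma map_mkQ_injOn {P : Submodule K V} {U W : Submodule K V}
    (hU : P ≤ U) (hW : P ≤ W) (h : U.map P.mkQ = W.map P.mkQ) : U = W := by
  have : ∀ {X : Submodule K V}, P ≤ X → (X.map P.mkQ).comap P.mkQ = X := by
    intro X hX
    rw [Submodule.comap_map_eq, Submodule.ker_mkQ, sup_eq_left.mpr hX]
  rw [← this hU, ← this hW, h]

end Quot

lemma point_bound {K : Type*} [Field K] [Fintype K] {n d k : ℕ}
    (C : Finset (Submodule K (Fin n → K)))
    (hdim : ∀ U ∈ C, finrank K ↥U = k)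
    (hdist : ∀ U ∈ C, ∀ W ∈ C, U ≠ W → d ≤ dS U W)
    {v : Fin n → K} (hv : v ≠ 0) (hmem : ∀ U ∈ C, v ∈ U) :
    C.card ≤ sSup (acdcSet K ((Fin n → K) ⧸ (K ∙ v)) d (k - 1)) := by
  classical
  set P : Submodule K (Fin n → K) := K ∙ v with hPdef
  have hP : finrank K ↥P = 1 := finrank_span_singleton hv
  have hPle : ∀ U ∈ C, P ≤ U := fun U hU =>
    (Submodule.span_singleton_le_iff_mem v U).mpr (hmem U hU)
  have hfin : Finite ((Fin n → K) ⧸ P) := Finite.of_surjective _ P.mkQ_surjective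
  set D := C.image (Submodule.map P.mkQ) with hDdef
  have hcard : D.card = C.card :=
    Finset.card_image_of_injOn (fun U hU W hW h => map_mkQ_injOn (hPle U hU) (hPle W hW) h)
  rw [← hcard]
  apply card_le_sSup_acdcSet
  · rintro U hU
    rw [hDdef, Finset.mem_image] at hU
    obtain ⟨u, hu, rfl⟩ := hU
    have h1 := finrank_map_mkQ (K := K) (hPle u hu)
    have hu' := hdim u hu
    omega
  · rintro U hU W hW hne
    rw [hDdef, Finset.mem_image] at hU hW
    obtain ⟨u, hu, rfl⟩ := hU
    obtain ⟨w, hw, rfl⟩ := hW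
    have huw : u ≠ w := fun h => hne (by rw [h])
    rw [dS_map_mkQ (hPle u hu) (hPle w hw)]
    exact hdist u hu w hw huw

/-- Johnson-type bound:
`A_q(n,d;k) ≤ ⌊ (q^n − 1)·A_q(n−1,d;k−1) / (q^k − 1) ⌋`. -/
theorem Acdc_johnson_bound_one {K : Type*} [Field K] [Fintype K] {n d k : ℕ}
    (hk1 : 1 ≤ k) (hkn : k ≤ n) (hde : Even d) :
    Acdc K (Fin n → K) d k ≤
      (Fintype.card K ^ n - 1) * Acdc K (Fin (n - 1) → K) d (k - 1) /
        (Fintype.card K ^ k - 1) := by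
  classical
  have hq : 1 < Fintype.card K := Fintype.one_lt_card
  have hqk : 0 < Fintype.card K ^ k - 1 := by
    have : 1 < Fintype.card K ^ k := Nat.one_lt_pow (by omega) hq
    omega
  have hAcdc : Acdc K (Fin n → K) d k = sSup (acdcSet K (Fin n → K) d k) := rfl
  rw [hAcdc]
  refine csSup_le ⟨0, ∅, by simp, by simp, by simp⟩ ?_
  rintro m ⟨C, hdim, hdist, rfl⟩
  rw [Nat.le_div_iff_mul_le hqk]
  set q := Fintype.card K with hqdef
  set A := Acdc K (Fin (n - 1) → K) d (k - 1) with hAdef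
  set S : Finset (Fin n → K) := Finset.univ.filter (· ≠ 0) with hSdef
  have hcV : Fintype.card (Fin n → K) = q ^ n := by
    rw [hqdef]; simp
  have hScard : S.card = q ^ n - 1 := by
    have h1 : S = Finset.univ.erase 0 := by
      ext x; simp [hSdef]
    rw [h1, Finset.card_erase_of_mem (Finset.mem_univ _), Finset.card_univ, hcV]
  have hcU : ∀ U ∈ C, (S.filter (· ∈ U)).card = q ^ k - 1 := by
    intro U hU
    have hfd : Fintype.card ↥U = q ^ k := by
      rw [card_eq_pow_finrank (K := K) (V := ↥U), hdim U hU]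
    have h2 : (S.filter (· ∈ U)) = (U : Set (Fin n → K)).toFinset.erase 0 := by
      ext x; simp [hSdef, and_comm]
    rw [h2, Finset.card_erase_of_mem (by simp), Set.toFinset_card, ← hfd]
    congr 1
  have hswap : ∑ U ∈ C, (S.filter (· ∈ U)).card
      = ∑ v ∈ S, (C.filter (fun U => v ∈ U)).card := by
    simp_rw [Finset.card_filter]
    exact Finset.sum_comm
  have hpoint : ∀ v ∈ S, (C.filter (fun U => v ∈ U)).card ≤ A := by
    intro v hv
    have hv0 : v ≠ 0 := by simpa [hSdef] using hv
    have h1 := point_bound (C.filter (fun U => v ∈ U))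
      (fun U hU => hdim U (Finset.mem_filter.mp hU).1)
      (fun U hU W hW => hdist U (Finset.mem_filter.mp hU).1 W (Finset.mem_filter.mp hW).1)
      hv0 (fun U hU => (Finset.mem_filter.mp hU).2)
    have hfr : finrank K ((Fin n → K) ⧸ (K ∙ v)) = n - 1 := by
      have h2 := Submodule.finrank_quotient_add_finrank (K ∙ v)
      rw [finrank_span_singleton hv0, Module.finrank_fin_fun] at h2
      omega
    obtain ⟨e⟩ := FiniteDimensional.nonempty_linearEquiv_of_finrank_eq
      (show finrank K ((Fin n → K) ⧸ (K ∙ v)) = finrank K (Fin (n - 1) → K) by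
        rw [hfr, Module.finrank_fin_fun])
    rw [acdcSet_congr e] at h1
    exact h1
  calc C.card * (q ^ k - 1) = ∑ U ∈ C, (S.filter (· ∈ U)).card := by
        rw [Finset.sum_congr rfl hcU, Finset.sum_const, smul_eq_mul]
    _ = ∑ v ∈ S, (C.filter (fun U => v ∈ U)).card := hswap
    _ ≤ ∑ v ∈ S, A := Finset.sum_le_sum hpoint
    _ = (q ^ n - 1) * A := by rw [Finset.sum_const, hScard, smul_eq_mul]
end

section
/- A k-spread of F_q^n (a partition of the nonzero vectors into k-dimensional subspaces meeting only in 0, covering every 1-dimensional subspace exactly once) exists if and only if k divides n, where 1 ≤ k ≤ n. -/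
open Module

/-- A `k`-spread of `V`: a set of `k`-dimensional subspaces such that every nonzero
vector lies in exactly one member. -/
def IsSpread {K V : Type*} [Field K] [AddCommGroup V] [Module K V]
    (S : Set (Submodule K V)) (k : ℕ) : Prop :=
  (∀ U ∈ S, finrank K ↥U = k) ∧ ∀ v : V, v ≠ 0 → ∃! U, U ∈ S ∧ v ∈ U

/-!
A `k`-spread of `𝔽_q^n` partitions its `q^n - 1` nonzero vectors into blocks of size `q^k - 1`,
and `q^k - 1 ∣ q^n - 1` forces `k ∣ n` because `gcd (q^k - 1) (q^n - 1) = q^(gcd k n) - 1`.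
Conversely, if `n = k m`, then `𝔽_q^n ≅ 𝔽_{q^k}^m` as `𝔽_q`-spaces, and the one-dimensional
`𝔽_{q^k}`-subspaces of `𝔽_{q^k}^m` form a `k`-spread.
-/

theorem Nat.dvd_of_pow_sub_one_dvd_pow_sub_one {q k n : ℕ} (hq : 1 < q)
    (h : q ^ k - 1 ∣ q ^ n - 1) : k ∣ n := by
  have hgcd := Nat.gcd_eq_left h
  rw [Nat.pow_sub_one_gcd_pow_sub_one] at hgcd
  have hpow : q ^ Nat.gcd k n = q ^ k := by
    have := Nat.one_le_pow (Nat.gcd k n) q (by omega)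
    have := Nat.one_le_pow k q (by omega)
    omega
  exact Nat.gcd_eq_left_iff_dvd.mp (Nat.pow_right_injective hq hpow)

namespace IsSpread

variable {K V : Type*} [Field K] [AddCommGroup V] [Module K V] {S : Set (Submodule K V)} {k : ℕ}

theorem eq_of_mem (hS : IsSpread S k) {U W : Submodule K V} (hU : U ∈ S) (hW : W ∈ S) {v : V}
    (hv : v ≠ 0) (hvU : v ∈ U) (hvW : v ∈ W) : U = W :=
  (hS.2 v hv).unique ⟨hU, hvU⟩ ⟨hW, hvW⟩

theorem card_sub_one_eq [Finite V] (hS : IsSpread S k) :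
    Nat.card V - 1 = S.ncard * (Nat.card K ^ k - 1) := by
  classical
  have : Fintype V := Fintype.ofFinite V
  set T := (Set.toFinite S).toFinset with hT
  let punctured : Submodule K V → Finset V := fun U => (U : Set V).toFinset.erase 0
  have hcover : Finset.univ.erase 0 = T.biUnion punctured := by
    ext v
    simp only [Finset.mem_erase, Finset.mem_univ, and_true, Finset.mem_biUnion, hT,
      Set.Finite.mem_toFinset, Set.mem_toFinset, SetLike.mem_coe, punctured]
    refine ⟨fun hv => ?_, fun ⟨_, _, hv, _⟩ => hv⟩
    obtain ⟨U, ⟨hU, hvU⟩, -⟩ := hS.2 v hv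
    exact ⟨U, hU, hv, hvU⟩
  have hdisj : (T : Set (Submodule K V)).PairwiseDisjoint punctured := by
    intro U hU W hW hUW
    refine Finset.disjoint_left.mpr fun v hvU hvW => hUW ?_
    simp only [Finset.mem_erase, Set.mem_toFinset, SetLike.mem_coe, punctured] at hvU hvW
    simp only [hT, Set.Finite.coe_toFinset] at hU hW
    exact hS.eq_of_mem hU hW hvU.1 hvU.2 hvW.2
  have hblock : ∀ U ∈ T, (punctured U).card = Nat.card K ^ k - 1 := by
    intro U hU
    rw [Finset.card_erase_of_mem (by simp), Set.toFinset_card, ← Nat.card_eq_fintype_card,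
      SetLike.coe_sort_coe, Module.natCard_eq_pow_finrank (K := K),
      hS.1 U (by simpa [hT] using hU)]
  rw [Nat.card_eq_fintype_card, ← Finset.card_univ,
    ← Finset.card_erase_of_mem (Finset.mem_univ 0), hcover, Finset.card_biUnion hdisj,
    Finset.sum_const_nat hblock, Set.ncard_eq_toFinset_card S]

theorem dvd_finrank [Finite K] [FiniteDimensional K V] (hS : IsSpread S k) :
    k ∣ finrank K V := by
  have : Finite V := Module.finite_of_finite K
  have hcount := hS.card_sub_one_eq
  rw [Module.natCard_eq_pow_finrank (K := K) (V := V)] at hcount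
  exact Nat.dvd_of_pow_sub_one_dvd_pow_sub_one Finite.one_lt_card (Dvd.intro_left _ hcount.symm)

theorem map {V' : Type*} [AddCommGroup V'] [Module K V'] (hS : IsSpread S k) (e : V ≃ₗ[K] V') :
    IsSpread (Submodule.map (e : V →ₗ[K] V') '' S) k := by
  refine ⟨?_, fun w hw => ?_⟩
  · rintro _ ⟨U, hU, rfl⟩
    rw [LinearEquiv.finrank_map_eq, hS.1 U hU]
  · have hv : e.symm w ≠ 0 := by simpa using hw
    obtain ⟨U, ⟨hU, hwU⟩, huniq⟩ := hS.2 (e.symm w) hv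
    refine ⟨U.map (e : V →ₗ[K] V'), ⟨⟨U, hU, rfl⟩, U.mem_map_equiv.mpr hwU⟩, ?_⟩
    rintro _ ⟨⟨W, hW, rfl⟩, hwW⟩
    rw [huniq W ⟨hW, W.mem_map_equiv.mp hwW⟩]

end IsSpread

theorem isSpread_restrictScalars_span_singleton (K : Type*) {L V : Type*} [Field K]
    [Field L] [AddCommGroup V] [Module L V] [Module K V] [Algebra K L] [IsScalarTower K L V] :
    IsSpread
      {U : Submodule K V | ∃ v : V, v ≠ 0 ∧ U = (Submodule.span L {v}).restrictScalars K}
      (finrank K L) := by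
  refine ⟨?_, fun v hv => ⟨_, ⟨⟨v, hv, rfl⟩, Submodule.mem_span_singleton_self v⟩, ?_⟩⟩
  · rintro _ ⟨v, hv, rfl⟩
    rw [((Submodule.restrictScalarsEquiv K L V _).restrictScalars K).finrank_eq,
      ← Module.finrank_mul_finrank K L, finrank_span_singleton hv, mul_one]
  · rintro _ ⟨⟨w, -, rfl⟩, hvw⟩
    obtain ⟨c, rfl⟩ := Submodule.mem_span_singleton.mp hvw
    have hc : c ≠ 0 := by rintro rfl; simp at hv
    rw [Submodule.span_singleton_smul_eq (IsUnit.mk0 c hc) w]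

theorem exists_isSpread_of_dvd {K V : Type*} [Field K] [Finite K] [AddCommGroup V] [Module K V]
    [FiniteDimensional K V] {k : ℕ} (hk : 0 < k) (hdvd : k ∣ finrank K V) :
    ∃ S : Set (Submodule K V), IsSpread S k := by
  obtain ⟨p, _⟩ := CharP.exists K
  have : Fact p.Prime := ⟨CharP.char_is_prime K p⟩
  have : NeZero k := ⟨hk.ne'⟩
  let L := FiniteField.Extension K p k
  have hL : finrank K L = k := FiniteField.finrank_extension K p k
  let W := Fin (finrank K V / k) → L
  have hW : finrank K W = finrank K V := by
    rw [← Module.finrank_mul_finrank K L W, Module.finrank_fin_fun, hL, Nat.mul_div_cancel' hdvd]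
  refine ⟨_, hL ▸ (isSpread_restrictScalars_span_singleton K (V := W)).map ?_⟩
  exact LinearEquiv.ofFinrankEq W V hW

theorem exists_spread_iff_dvd_general {K : Type*} [Field K] [Fintype K] {n k : ℕ}
    (hk1 : 1 ≤ k) :
    (∃ S : Set (Submodule K (Fin n → K)), IsSpread S k) ↔ k ∣ n := by
  refine ⟨fun ⟨_, hS⟩ => ?_, fun h => exists_isSpread_of_dvd hk1 (by simpa using h)⟩
  simpa using hS.dvd_finrank

/-- A `k`-spread of `F_q^n` exists if and only if `k` divides `n`. -/
theorem exists_spread_iff_dvd {K : Type*} [Field K] [Fintype K] {n k : ℕ}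
    (hk1 : 1 ≤ k) (hkn : k ≤ n) :
    (∃ S : Set (Submodule K (Fin n → K)), IsSpread S k) ↔ k ∣ n :=
  exists_spread_iff_dvd_general hk1
end

section
/- Beutelspacher's theorem: For positive integers k, n with n ≡ 1 (mod k) and 1 ≤ k ≤ n, the maximum size of a partial k-spread of F_q^n equals (q^n − q^{k+1} + q^k − 1)/(q^k − 1). -/
open Module

/-!
Write `n = s k + 1` and `N = spreadSize q k s`, so that `N (q^k - 1) = q^n - q^{k+1} + q^k - 1`.

Lower bound: split `𝔽_q^{(s+1)k+1} = Z ⊕ W` with `dim Z = k` and `dim W = s k + 1`. Identify `W`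
with the field `𝔽_{q^{sk+1}}` and embed `Z` into it. A partial spread of `W`, together with
the `q^{sk+1}` graphs of the maps `z ↦ a z`, is a partial spread of `Z × W`: two graphs meet
trivially because `a - b` is invertible for `a ≠ b`.

Upper bound: if a partial spread `D` had `N + 1` members, exactly `q^{k+1} - 2q^k + 1` nonzero
vectors would be left uncovered. Each member meets a hyperplane `H` in dimension `k` or `k - 1`,
which fixes the number of uncovered vectors in `H` modulo `q^{k-1}(q - 1)` and forces it to be at
least `q^k - 2q^{k-1} + 1`. Counting pairs (uncovered vector, hyperplane through it) both ways,
with nonzero functionals in place of hyperplanes, gives an impossible inequality.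
-/

open Finset

theorem Int.ModEq.ge_of_lt_modulus {a r m : ℤ} (h : a ≡ r [ZMOD m]) (ha : 0 ≤ a) (hr : 0 ≤ r)
    (hrm : r < m) : r ≤ a := by
  have hdiv := Int.emod_add_mul_ediv a m
  have := Int.ediv_nonneg ha (hr.trans hrm.le)
  rw [h, Int.emod_eq_of_lt hr hrm] at hdiv
  nlinarith

namespace Beutelspacher

/-- The size of a maximal partial `k`-spread of `𝔽_q^{sk+1}`. -/
def spreadSize (q k s : ℕ) : ℕ :=
  1 + ∑ i ∈ Ico 1 s, q ^ (i * k + 1)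

theorem spreadSize_succ {q k s : ℕ} (hs : 1 ≤ s) :
    spreadSize q k (s + 1) = spreadSize q k s + q ^ (s * k + 1) := by
  rw [spreadSize, spreadSize, sum_Ico_succ_top hs, add_assoc]

theorem spreadSize_mul {q k s : ℕ} (hs : 1 ≤ s) :
    (spreadSize q k s : ℤ) * (q ^ k - 1) = q ^ (s * k + 1) - q ^ (k + 1) + q ^ k - 1 := by
  induction s, hs using Nat.le_induction with
  | base => simp [spreadSize]
  | succ s hs ih =>
    rw [spreadSize_succ hs]
    push_cast
    linear_combination ih

theorem spreadSize_eq_div {q k s : ℕ} (hq : 2 ≤ q) (hk : 1 ≤ k) (hs : 1 ≤ s) :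
    spreadSize q k s = (q ^ (s * k + 1) - q ^ (k + 1) + q ^ k - 1) / (q ^ k - 1) := by
  have hqk : 2 ≤ q ^ k := le_self_pow₀ (by omega) (by omega) |>.trans' hq
  have hle : q ^ (k + 1) ≤ q ^ (s * k + 1) :=
    Nat.pow_le_pow_right (by omega) (by nlinarith)
  have hnum : q ^ (s * k + 1) - q ^ (k + 1) + q ^ k - 1 = spreadSize q k s * (q ^ k - 1) := by
    zify [hle, (by omega : 1 ≤ q ^ k), (by omega : 1 ≤ q ^ (s * k + 1) - q ^ (k + 1) + q ^ k)]
    rw [spreadSize_mul hs]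
  rw [hnum, Nat.mul_div_cancel _ (by omega)]

theorem pow_modEq_pow_pred (q : ℤ) (k : ℕ) :
    q ^ k ≡ q ^ (k - 1) [ZMOD q ^ (k - 1) * (q - 1)] := by
  rcases k with _ | k
  · rfl
  · exact Int.modEq_iff_dvd.2 ⟨-1, by rw [Nat.add_sub_cancel]; ring⟩

theorem spreadSize_residue (q : ℕ) {k s : ℕ} (hk : 1 ≤ k) (hs : 1 ≤ s) :
    (q : ℤ) ^ (s * k) - 1 - (spreadSize q k s + 1) * ((q : ℤ) ^ (k - 1) - 1) ≡
      (q : ℤ) ^ k - 2 * (q : ℤ) ^ (k - 1) + 1 [ZMOD (q : ℤ) ^ (k - 1) * (q - 1)] := by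
  have hN := spreadSize_mul (q := q) (k := k) hs
  obtain ⟨j, rfl⟩ : ∃ j, k = j + 1 := ⟨k - 1, by omega⟩
  obtain ⟨t, rfl⟩ : ∃ t, s = t + 1 := ⟨s - 1, by omega⟩
  refine (Int.modEq_iff_dvd.2
    ⟨spreadSize q (j + 1) (t + 1) - q ^ (t * (j + 1) + 1) + q - 1, ?_⟩).symm
  rw [Nat.add_sub_cancel]
  linear_combination -hN

/-- The right side minus the left side is `(q - 1) (q^{sk} + q^{k-1} (q - 2))`. -/
theorem beutelspacher_count_lt {q : ℤ} (hq : 2 ≤ q) {k : ℕ} (hk : 1 ≤ k) (s : ℕ) :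
    (q ^ (k + 1) - 2 * q ^ k + 1) * (q ^ (s * k) - 1) <
      (q ^ (s * k + 1) - 1) * (q ^ k - 2 * q ^ (k - 1) + 1) := by
  obtain ⟨j, rfl⟩ : ∃ j, k = j + 1 := ⟨k - 1, by omega⟩
  have hQ : 0 < q ^ j := by positivity
  have hP : 0 < q ^ (s * (j + 1)) := by positivity
  simp only [Nat.add_sub_cancel, pow_succ]
  nlinarith [mul_pos (show 0 < q - 1 by omega) hP,
    mul_nonneg hQ.le (mul_nonneg (show 0 ≤ q - 1 by omega) (show 0 ≤ q - 2 by omega))]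

section LinearAlgebra

variable {K V : Type*} [Field K] [AddCommGroup V] [Module K V]

def IsPartialSpread (k : ℕ) (C : Finset (Submodule K V)) : Prop :=
  (∀ U ∈ C, finrank K U = k) ∧ (C : Set (Submodule K V)).Pairwise Disjoint

theorem IsPartialSpread.subset {k : ℕ} {C D : Finset (Submodule K V)} (hC : IsPartialSpread k C)
    (hDC : D ⊆ C) : IsPartialSpread k D :=
  ⟨fun U hU => hC.1 U (hDC hU), hC.2.mono (coe_subset.2 hDC)⟩

theorem IsPartialSpread.image_map {V' : Type*} [AddCommGroup V'] [Module K V'] {k : ℕ}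
    {C : Finset (Submodule K V)} (hC : IsPartialSpread k C) {f : V →ₗ[K] V'}
    (hf : Function.Injective f) : IsPartialSpread k (C.image (Submodule.map f)) := by
  classical
  refine ⟨?_, ?_⟩
  · simp only [mem_image, forall_exists_index, and_imp, forall_apply_eq_imp_iff₂]
    intro U hU
    rw [LinearEquiv.finrank_eq (Submodule.equivMapOfInjective f hf U).symm, hC.1 U hU]
  · rw [coe_image]
    exact (hC.2.imp fun _ _ => Submodule.disjoint_map hf).image

theorem two_mul_le_dS_iff_disjoint [FiniteDimensional K V] {k : ℕ} {U W : Submodule K V}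
    (hU : finrank K U = k) (hW : finrank K W = k) : 2 * k ≤ dS U W ↔ Disjoint U W := by
  have := Submodule.finrank_sup_add_finrank_inf_eq U W
  rw [disjoint_iff, ← Submodule.finrank_eq_zero, dS]
  omega

theorem Acdc_two_mul_eq [FiniteDimensional K V] {k N : ℕ}
    (hle : ∀ C : Finset (Submodule K V), IsPartialSpread k C → C.card ≤ N)
    (hex : ∃ C : Finset (Submodule K V), IsPartialSpread k C ∧ C.card = N) :
    Acdc K V (2 * k) k = N := by
  have hspread : ∀ C : Finset (Submodule K V), (∀ U ∈ C, finrank K U = k) →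
      ((∀ U ∈ C, ∀ W ∈ C, U ≠ W → 2 * k ≤ dS U W) ↔ IsPartialSpread k C) := by
    intro C hC
    rw [IsPartialSpread, and_iff_right hC]
    exact forall₂_congr fun U hU => forall₂_congr fun W hW => imp_congr_right fun _ =>
      two_mul_le_dS_iff_disjoint (hC U hU) (hC W hW)
  refine IsGreatest.csSup_eq ⟨?_, ?_⟩
  · obtain ⟨C, hC, rfl⟩ := hex
    exact ⟨C, hC.1, (hspread C hC.1).2 hC, rfl⟩
  · rintro _ ⟨C, hdim, hdist, rfl⟩
    exact hle C ((hspread C hdim).1 hdist)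

theorem finrank_inf_ker_add_one [FiniteDimensional K V] {φ : Module.Dual K V} (hφ : φ ≠ 0)
    {U : Submodule K V} (hU : ¬U ≤ LinearMap.ker φ) :
    finrank K ↥(U ⊓ LinearMap.ker φ) + 1 = finrank K U := by
  have hsup : U ⊔ LinearMap.ker φ = ⊤ := by
    rw [sup_comm, ← codisjoint_iff]
    exact (LinearMap.isCoatom_ker_of_surjective (LinearMap.surjective hφ)).not_le_iff_codisjoint.1
      hU
  have := Submodule.finrank_sup_add_finrank_inf_eq U (LinearMap.ker φ)
  rw [hsup, finrank_top, ← Module.Dual.finrank_ker_add_one_of_ne_zero hφ] at this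
  omega

end LinearAlgebra

section Counting

open scoped Classical

variable {K V : Type*} [Field K] [Fintype K] [AddCommGroup V] [Module K V] [Fintype V]

theorem card_filter_mem_ne_zero (W : Submodule K V) :
    #{v | v ∈ W ∧ v ≠ 0} = Fintype.card K ^ finrank K W - 1 := by
  rw [← filter_filter, filter_ne', card_erase_of_mem (by simp), ← Fintype.card_subtype,
    card_eq_pow_finrank (K := K) (V := W)]

noncomputable def uncovered (D : Finset (Submodule K V)) (W : Submodule K V) : Finset V :=
  {v | v ∈ W ∧ v ≠ 0 ∧ ∀ U ∈ D, v ∉ U}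

theorem card_uncovered_add_sum {D : Finset (Submodule K V)}
    (hD : (D : Set (Submodule K V)).Pairwise Disjoint) (W : Submodule K V) :
    #(uncovered D W) + ∑ U ∈ D, (Fintype.card K ^ finrank K ↥(U ⊓ W) - 1) =
      Fintype.card K ^ finrank K W - 1 := by
  have hcover : ({v | v ∈ W ∧ v ≠ 0} : Finset V) =
      uncovered D W ∪ D.biUnion fun U => {v | v ∈ U ⊓ W ∧ v ≠ 0} := by
    ext v
    simp only [uncovered, mem_union, mem_filter, mem_biUnion, Submodule.mem_inf, mem_univ,
      true_and]
    grind
  have hpieces : (D : Set (Submodule K V)).PairwiseDisjoint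
      fun U => ({v | v ∈ U ⊓ W ∧ v ≠ 0} : Finset V) := by
    intro U hU U' hU' hne
    simp only [Function.onFun, disjoint_left, mem_filter, mem_univ, true_and, Submodule.mem_inf]
    rintro v ⟨⟨hvU, -⟩, hv0⟩ ⟨⟨hvU', -⟩, -⟩
    exact hv0 (Submodule.disjoint_def.1 (hD hU hU' hne) v hvU hvU')
  have hsep : Disjoint (uncovered D W) (D.biUnion fun U => {v | v ∈ U ⊓ W ∧ v ≠ 0}) := by
    simp only [uncovered, disjoint_left, mem_filter, mem_biUnion, mem_univ, true_and,
      Submodule.mem_inf]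
    rintro v ⟨-, -, hv⟩ ⟨U, hU, ⟨hvU, -⟩, -⟩
    exact hv U hU hvU
  rw [← card_filter_mem_ne_zero, hcover, card_union_of_disjoint hsep, card_biUnion hpieces]
  simp only [card_filter_mem_ne_zero]

theorem card_uncovered_ker_modEq {k : ℕ} {D : Finset (Submodule K V)}
    (hD : IsPartialSpread k D) {φ : Module.Dual K V} (hφ : φ ≠ 0) :
    (#(uncovered D (LinearMap.ker φ)) : ℤ) + #D * ((Fintype.card K : ℤ) ^ (k - 1) - 1) ≡
      (Fintype.card K : ℤ) ^ (finrank K V - 1) - 1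
      [ZMOD (Fintype.card K : ℤ) ^ (k - 1) * (Fintype.card K - 1)] := by
  have hcount := card_uncovered_add_sum hD.2 (LinearMap.ker φ)
  set q := Fintype.card K
  have hq : 1 ≤ q := Fintype.card_pos
  rw [← Module.Dual.finrank_ker_add_one_of_ne_zero hφ, Nat.add_sub_cancel]
  zify [Nat.one_le_pow _ _ hq] at hcount
  calc (#(uncovered D (LinearMap.ker φ)) : ℤ) + #D * ((q : ℤ) ^ (k - 1) - 1)
      = #(uncovered D (LinearMap.ker φ)) + ∑ U ∈ D, ((q : ℤ) ^ (k - 1) - 1) := by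
        rw [sum_const, nsmul_eq_mul]
    _ ≡ #(uncovered D (LinearMap.ker φ)) +
          ∑ U ∈ D, ((q : ℤ) ^ finrank K ↥(U ⊓ LinearMap.ker φ) - 1)
        [ZMOD (q : ℤ) ^ (k - 1) * (q - 1)] := by
      refine Int.ModEq.add_left _ (Int.ModEq.sum fun U hU => Int.ModEq.sub_right 1 ?_)
      by_cases hUφ : U ≤ LinearMap.ker φ
      · rw [inf_eq_left.2 hUφ, hD.1 U hU]
        exact (pow_modEq_pow_pred _ k).symm
      · have := finrank_inf_ker_add_one hφ hUφ
        rw [show finrank K ↥(U ⊓ LinearMap.ker φ) = k - 1 by grind [hD.1 U hU]]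
    _ = _ := hcount

theorem sum_card_uncovered_ker [Fintype (Module.Dual K V)] (D : Finset (Submodule K V)) :
    ∑ φ ∈ ({φ | φ ≠ 0} : Finset (Module.Dual K V)), #(uncovered D (LinearMap.ker φ)) =
      #(uncovered D ⊤) * (Fintype.card K ^ (finrank K V - 1) - 1) := by
  calc ∑ φ ∈ ({φ | φ ≠ 0} : Finset (Module.Dual K V)), #(uncovered D (LinearMap.ker φ))
      = ∑ φ ∈ ({φ | φ ≠ 0} : Finset (Module.Dual K V)),
          #((uncovered D ⊤).bipartiteAbove (fun φ v => φ v = 0) φ) := by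
        refine sum_congr rfl fun φ _ => ?_
        congr 1
        ext v
        simp only [uncovered, bipartiteAbove, LinearMap.mem_ker, ne_eq, mem_filter, mem_univ,
          true_and, Submodule.mem_top]
        tauto
    _ = ∑ v ∈ uncovered D ⊤, (Fintype.card K ^ (finrank K V - 1) - 1) := by
      rw [sum_card_bipartiteAbove_eq_sum_card_bipartiteBelow]
      refine sum_congr rfl fun v hv => ?_
      have hv0 : Module.Dual.eval K V v ≠ 0 := by
        rw [Ne, Module.eval_apply_eq_zero_iff]
        exact (mem_filter.1 hv).2.2.1
      have hrank := Module.Dual.finrank_ker_add_one_of_ne_zero hv0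
      rw [Subspace.dual_finrank_eq] at hrank
      rw [← Nat.eq_sub_of_add_eq hrank, ← card_filter_mem_ne_zero]
      congr 1
      ext φ
      simp [bipartiteBelow, and_comm]
    _ = _ := by rw [sum_const, smul_eq_mul]

theorem card_uncovered_top {k s : ℕ} (hs : 1 ≤ s) (hV : finrank K V = s * k + 1)
    {D : Finset (Submodule K V)} (hD : IsPartialSpread k D)
    (hcard : #D = spreadSize (Fintype.card K) k s + 1) :
    (#(uncovered D ⊤) : ℤ) = (Fintype.card K : ℤ) ^ (k + 1) - 2 * Fintype.card K ^ k + 1 := by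
  have hcount := card_uncovered_add_sum hD.2 ⊤
  rw [sum_congr rfl fun U hU => by rw [inf_top_eq, hD.1 U hU], sum_const, smul_eq_mul,
    finrank_top, hV, hcard] at hcount
  zify [Nat.one_le_pow _ _ (Fintype.card_pos : 0 < Fintype.card K)] at hcount
  linear_combination hcount - spreadSize_mul (q := Fintype.card K) (k := k) hs

theorem le_card_uncovered_ker {k s : ℕ} (hk : 2 ≤ k) (hs : 1 ≤ s)
    (hV : finrank K V = s * k + 1) {D : Finset (Submodule K V)} (hD : IsPartialSpread k D)
    (hcard : #D = spreadSize (Fintype.card K) k s + 1) {φ : Module.Dual K V} (hφ : φ ≠ 0) :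
    (Fintype.card K : ℤ) ^ k - 2 * Fintype.card K ^ (k - 1) + 1 ≤
      #(uncovered D (LinearMap.ker φ)) := by
  have hmod := card_uncovered_ker_modEq hD hφ
  have hresidue := spreadSize_residue (Fintype.card K) (by omega : 1 ≤ k) hs
  rw [hV, Nat.add_sub_cancel, hcard] at hmod
  set q := Fintype.card K
  have hq : (2 : ℤ) ≤ q := by exact_mod_cast Fintype.one_lt_card
  have hQ : 1 < (q : ℤ) ^ (k - 1) := one_lt_pow₀ (by omega) (by omega)
  have hpow : (q : ℤ) ^ k = q ^ (k - 1) * q := by rw [← pow_succ, Nat.sub_add_cancel (by omega)]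
  have hhole := hmod.sub_right ((spreadSize q k s + 1) * (q ^ (k - 1) - 1))
  push_cast at hhole
  rw [add_sub_cancel_right] at hhole
  refine (hhole.trans hresidue).ge_of_lt_modulus (Nat.cast_nonneg _) ?_ ?_ <;> nlinarith

theorem IsPartialSpread.card_le_spreadSize {k s : ℕ} (hk : 2 ≤ k) (hs : 1 ≤ s)
    (hV : finrank K V = s * k + 1) {C : Finset (Submodule K V)} (hC : IsPartialSpread k C) :
    #C ≤ spreadSize (Fintype.card K) k s := by
  by_contra! hlt
  obtain ⟨D, hDC, hcard⟩ := exists_subset_card_eq (Nat.succ_le_of_lt hlt)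
  have hD := hC.subset hDC
  have : Finite (Module.Dual K V) := Module.finite_of_finite K
  let := Fintype.ofFinite (Module.Dual K V)
  have hdouble := sum_card_uncovered_ker D
  have hfunctionals := card_filter_mem_ne_zero (⊤ : Submodule K (Module.Dual K V))
  simp only [Submodule.mem_top, true_and, finrank_top, Subspace.dual_finrank_eq, hV,
    Nat.add_sub_cancel] at hdouble hfunctionals
  zify [Nat.one_le_pow _ _ (Fintype.card_pos : 0 < Fintype.card K)] at hdouble hfunctionals
  have hsum := card_nsmul_le_sum ({φ | φ ≠ 0} : Finset (Module.Dual K V)) _ _ fun φ hφ =>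
    le_card_uncovered_ker hk hs hV hD hcard (mem_filter.1 hφ).2
  rw [hdouble, nsmul_eq_mul, hfunctionals, card_uncovered_top hs hV hD hcard] at hsum
  exact (beutelspacher_count_lt (by exact_mod_cast Fintype.one_lt_card) (by omega) s).not_ge hsum

end Counting

section Construction

variable {K : Type*} [Field K]

theorem exists_submodule_finrank_eq {V : Type*} [AddCommGroup V] [Module K V] {n : ℕ}
    (h : n ≤ finrank K V) : ∃ U : Submodule K V, finrank K U = n := by
  obtain ⟨s, hs, hli⟩ := exists_finset_linearIndependent_of_le_finrank h
  exact ⟨Submodule.span K s, by rw [finrank_span_finset_eq_card hli, hs]⟩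

theorem exists_spreadSet [Finite K] (Z W : Type*) [AddCommGroup Z] [Module K Z]
    [AddCommGroup W] [Module K W] [FiniteDimensional K Z] [FiniteDimensional K W]
    (h : finrank K Z ≤ finrank K W) :
    ∃ A : W → (Z →ₗ[K] W), ∀ a b, a ≠ b → Function.Injective (A a - A b) := by
  by_cases hW : finrank K W = 0
  · have := Module.finrank_zero_iff.1 hW
    exact ⟨0, fun a b hab => absurd (Subsingleton.elim a b) hab⟩
  obtain ⟨p, hp⟩ := CharP.exists K
  have := Fact.mk (CharP.char_is_prime K p)
  have := NeZero.mk hW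
  let L := FiniteField.Extension K p (finrank K W)
  have hL := FiniteField.finrank_extension K p (finrank K W)
  let e : L ≃ₗ[K] W := LinearEquiv.ofFinrankEq L W hL
  obtain ⟨j, hj⟩ := (finrank_le_iff_exists_linearMap (M := Z) (M' := L)).1 (h.trans hL.ge)
  refine ⟨fun w => e.toLinearMap ∘ₗ LinearMap.mulLeft K (e.symm w) ∘ₗ j, fun a b hab => ?_⟩
  rw [← LinearMap.ker_eq_bot, LinearMap.ker_eq_bot']
  intro z hz
  have hprod : (e.symm a - e.symm b) * j z = 0 := by
    apply e.injective
    simpa [sub_mul] using hz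
  rcases mul_eq_zero.1 hprod with hab' | hz'
  · exact absurd (e.symm.injective (sub_eq_zero.1 hab')) hab
  · exact hj (hz'.trans (map_zero j).symm)

end Construction

section Graph

variable {K Z W : Type*} [Field K] [AddCommGroup Z] [Module K Z] [AddCommGroup W] [Module K W]

theorem finrank_graph (f : Z →ₗ[K] W) : finrank K f.graph = finrank K Z := by
  rw [LinearMap.graph_eq_range_prod, LinearMap.finrank_range_of_inj]
  exact fun x y h => congrArg Prod.fst h

theorem disjoint_graph_of_injective_sub {f g : Z →ₗ[K] W} (h : Function.Injective (f - g)) :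
    Disjoint f.graph g.graph := by
  rw [Submodule.disjoint_def]
  rintro ⟨z, w⟩ hf hg
  simp only [LinearMap.mem_graph_iff] at hf hg
  have hz : z = 0 := h (by simp [← hf, ← hg])
  simp [hz, hf]

theorem disjoint_graph_map_inr (f : Z →ₗ[K] W) (U : Submodule K W) :
    Disjoint f.graph (U.map (LinearMap.inr K Z W)) := by
  rw [Submodule.disjoint_def]
  rintro ⟨z, w⟩ hf ⟨u, -, hu⟩
  simp only [LinearMap.mem_graph_iff] at hf
  simp only [LinearMap.inr_apply, Prod.mk.injEq] at hu
  simp [← hu.1, hf]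

theorem IsPartialSpread.exists_prod_card_eq {k : ℕ} (hk : k ≠ 0) (hZ : finrank K Z = k)
    {C : Finset (Submodule K W)} (hC : IsPartialSpread k C) {ι : Type*} [Fintype ι]
    (A : ι → Z →ₗ[K] W) (hA : ∀ a b, a ≠ b → Function.Injective (A a - A b)) :
    ∃ C' : Finset (Submodule K (Z × W)), IsPartialSpread k C' ∧ #C' = #C + Fintype.card ι := by
  classical
  have hgraph_ne_bot : ∀ a, (A a).graph ≠ ⊥ := fun a h => by
    have := finrank_graph (A a)
    rw [h, finrank_bot, hZ] at this
    exact hk this.symm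
  have hgraph_inj : Function.Injective fun a => (A a).graph := fun a b hab => by
    by_contra hne
    have := disjoint_graph_of_injective_sub (hA a b hne)
    rw [show (A a).graph = (A b).graph from hab, disjoint_self] at this
    exact hgraph_ne_bot b this
  let C₁ := C.image (Submodule.map (LinearMap.inr K Z W))
  let C₂ := univ.image fun a => (A a).graph
  have hC₁ : IsPartialSpread k C₁ := hC.image_map LinearMap.inr_injective
  have hC₂ : IsPartialSpread k C₂ := by
    refine ⟨?_, ?_⟩
    · simp only [C₂, mem_image, mem_univ, true_and, forall_exists_index, forall_apply_eq_imp_iff]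
      exact fun a => (finrank_graph (A a)).trans hZ
    · rw [coe_image]
      exact Set.Pairwise.image fun a _ b _ hab => disjoint_graph_of_injective_sub (hA a b hab)
  have hcross : ∀ U ∈ C₁, ∀ U' ∈ C₂, Disjoint U U' := by
    simp only [C₁, C₂, mem_image, mem_univ, true_and]
    rintro _ ⟨U, -, rfl⟩ _ ⟨a, rfl⟩
    exact (disjoint_graph_map_inr (A a) U).symm
  refine ⟨C₁ ∪ C₂, ⟨?_, ?_⟩, ?_⟩
  · intro U hU
    rcases mem_union.1 hU with hU | hU
    exacts [hC₁.1 U hU, hC₂.1 U hU]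
  · rw [coe_union, Set.pairwise_union_of_symm]
    exact ⟨hC₁.2, hC₂.2, fun U hU U' hU' _ => hcross U hU U' hU'⟩
  · have hdisj : Disjoint C₁ C₂ := disjoint_left.2 fun U hU₁ hU₂ => by
      obtain ⟨a, -, rfl⟩ := mem_image.1 hU₂
      exact hgraph_ne_bot a (disjoint_self.1 (hcross _ hU₁ _ hU₂))
    rw [card_union_of_disjoint hdisj, card_image_of_injective _
      (Submodule.map_injective_of_injective LinearMap.inr_injective),
      card_image_of_injective _ hgraph_inj, card_univ]

end Graph

theorem exists_isPartialSpread_card_eq_spreadSize {K V : Type*} [Field K] [Fintype K]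
    [AddCommGroup V] [Module K V] [FiniteDimensional K V] {k s : ℕ} (hk : k ≠ 0) (hs : 1 ≤ s)
    (hV : finrank K V = s * k + 1) :
    ∃ C : Finset (Submodule K V), IsPartialSpread k C ∧ #C = spreadSize (Fintype.card K) k s := by
  induction s, hs using Nat.le_induction generalizing V with
  | base =>
    obtain ⟨U, hU⟩ := exists_submodule_finrank_eq (K := K) (V := V) (n := k) (by omega)
    exact ⟨{U}, ⟨by simpa using hU, by simp⟩, by simp [spreadSize]⟩
  | succ s hs ih =>
    obtain ⟨W, hW⟩ := exists_submodule_finrank_eq (K := K) (V := V) (n := s * k + 1)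
      (by rw [hV]; nlinarith)
    obtain ⟨Z, hWZ⟩ := W.exists_isCompl
    have hZ : finrank K Z = k := by
      have := Submodule.finrank_add_eq_of_isCompl hWZ
      rw [hV, hW] at this
      linarith
    obtain ⟨C, hC, hCcard⟩ := ih hW
    obtain ⟨A, hA⟩ := exists_spreadSet (K := K) Z W (by rw [hZ, hW]; nlinarith)
    have : Finite W := Module.finite_of_finite K
    have : Fintype W := Fintype.ofFinite W
    obtain ⟨C', hC', hC'card⟩ := hC.exists_prod_card_eq hk hZ A hA
    let e := Submodule.prodEquivOfIsCompl Z W hWZ.symm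
    refine ⟨C'.image (Submodule.map e.toLinearMap), hC'.image_map e.injective, ?_⟩
    rw [card_image_of_injective _ (Submodule.map_injective_of_injective e.injective), hC'card,
      hCcard, card_eq_pow_finrank (K := K) (V := W), hW, spreadSize_succ hs]

end Beutelspacher

/-- Beutelspacher's theorem: for `n ≡ 1 (mod k)`,
`A_q(n,2k;k) = (q^n − q^{k+1} + q^k − 1)/(q^k − 1)`. -/
theorem Acdc_beutelspacher {K : Type*} [Field K] [Fintype K] {n k : ℕ}
    (hk1 : 1 ≤ k) (hkn : k ≤ n) (hmod : n % k = 1) :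
    Acdc K (Fin n → K) (2 * k) k =
      (Fintype.card K ^ n - Fintype.card K ^ (k + 1) + Fintype.card K ^ k - 1) /
        (Fintype.card K ^ k - 1) := by
  have hk : 2 ≤ k := by
    by_contra! hk
    rw [show k = 1 by omega, Nat.mod_one] at hmod
    exact zero_ne_one hmod
  obtain ⟨s, hs, rfl⟩ : ∃ s, 1 ≤ s ∧ n = s * k + 1 :=
    ⟨n / k, Nat.div_pos hkn (by omega), by rw [← hmod, Nat.div_add_mod']⟩
  have hV : finrank K (Fin (s * k + 1) → K) = s * k + 1 := by simp
  rw [← Beutelspacher.spreadSize_eq_div Fintype.one_lt_card hk1 hs]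
  exact Beutelspacher.Acdc_two_mul_eq (fun C hC => hC.card_le_spreadSize hk hs hV)
    (Beutelspacher.exists_isPartialSpread_card_eq_spreadSize (by omega) hs hV)
end

section
/- MRD code size bound: Let m, n ≥ d ≥ 1 be integers and q a prime power. Any set C of m×n matrices over F_q such that rank(A−B) ≥ d for all distinct A, B ∈ C satisfies |C| ≤ q^{max{n,m}·(min{n,m}−d+1)}. -/
/-!
This is the Singleton bound for rank-metric codes. Two codewords agreeing on a fixed set of
`#rows - d + 1` rows differ in at most `d - 1` rows, so their difference has rank `< d` and they
coincide. Restricting to those rows is therefore injective on the code, which gives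
`|C| ≤ q ^ (#cols · (#rows - d + 1))`; transposing exchanges the roles of rows and columns.
-/

open Finset

namespace Matrix

variable {m n K : Type*} [Fintype m] [Fintype n] [Field K] [Fintype K]
  {C : Finset (Matrix m n K)} {d : ℕ}

theorem card_le_pow_of_card_lt_card_add {s : Finset m} (hs : Fintype.card m < #s + d)
    (h : ∀ A ∈ C, ∀ B ∈ C, A ≠ B → d ≤ (A - B).rank) :
    #C ≤ Fintype.card K ^ (#s * Fintype.card n) := by
  classical
  let restrict (A : Matrix m n K) : s → n → K := fun i => A i
  have hinj : Set.InjOn restrict C := by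
    intro A hA B hB hAB
    by_contra hne
    have hsupp : Function.support (A - B).row ⊆ ↑sᶜ := by
      intro i hi
      by_contra his
      exact hi (sub_eq_zero.2 (congrFun hAB ⟨i, by simpa using his⟩))
    have hrank := rank_le_card_of_support_subset _ _ hsupp
    have hdist := h A hA B hB hne
    have hsm := card_le_univ s
    rw [card_compl] at hrank
    omega
  calc #C ≤ Fintype.card (s → n → K) :=
        (card_le_card_of_injOn restrict (fun _ _ => mem_univ _) hinj).trans_eq card_univ
    _ = Fintype.card K ^ (#s * Fintype.card n) := by
        simp [← pow_mul, mul_comm]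

theorem singleton_bound_rows (hd : 1 ≤ d) (hdm : d ≤ Fintype.card m)
    (h : ∀ A ∈ C, ∀ B ∈ C, A ≠ B → d ≤ (A - B).rank) :
    #C ≤ Fintype.card K ^ (Fintype.card n * (Fintype.card m - d + 1)) := by
  obtain ⟨s, -, hs⟩ := exists_subset_card_eq (s := (univ : Finset m))
    (n := Fintype.card m - d + 1) (by rw [card_univ]; omega)
  rw [mul_comm, ← hs]
  exact card_le_pow_of_card_lt_card_add (by omega) h

theorem singleton_bound_cols (hd : 1 ≤ d) (hdn : d ≤ Fintype.card n)
    (h : ∀ A ∈ C, ∀ B ∈ C, A ≠ B → d ≤ (A - B).rank) :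
    #C ≤ Fintype.card K ^ (Fintype.card m * (Fintype.card n - d + 1)) := by
  have hC : #(C.map (transposeAddEquiv m n K).toEquiv.toEmbedding) = #C := card_map _
  rw [← hC]
  refine singleton_bound_rows hd hdn ?_
  simp only [mem_map_equiv]
  intro A hA B hB hne
  simpa [← transpose_sub, rank_transpose] using h _ hA _ hB (by simpa using hne)

end Matrix

theorem mrd_code_size_bound_general {K : Type*} [Field K] [Fintype K]
    {m n d : ℕ} (hd1 : 1 ≤ d) (hdm : d ≤ m) (hdn : d ≤ n)
    (C : Finset (Matrix (Fin m) (Fin n) K))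
    (h : ∀ A ∈ C, ∀ B ∈ C, A ≠ B → d ≤ (A - B).rank) :
    C.card ≤ Fintype.card K ^ (max n m * (min n m - d + 1)) := by
  rcases le_total m n with hmn | hnm
  · rw [max_eq_left hmn, min_eq_right hmn]
    simpa using Matrix.singleton_bound_rows (C := C) hd1 (by simpa using hdm) h
  · rw [max_eq_right hnm, min_eq_left hnm]
    simpa using Matrix.singleton_bound_cols (C := C) hd1 (by simpa using hdn) h

/-- MRD code size bound: a set of `m×n` matrices over `F_q` with pairwise rank distance
at least `d` has at most `q^{max{n,m}·(min{n,m}−d+1)}` elements. -/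
theorem mrd_code_size_bound {K : Type*} [Field K] [Fintype K] [DecidableEq K]
    {m n d : ℕ} (hd1 : 1 ≤ d) (hdm : d ≤ m) (hdn : d ≤ n)
    (C : Finset (Matrix (Fin m) (Fin n) K))
    (h : ∀ A ∈ C, ∀ B ∈ C, A ≠ B → d ≤ (A - B).rank) :
    C.card ≤ Fintype.card K ^ (max n m * (min n m - d + 1)) :=
  mrd_code_size_bound_general hd1 hdm hdn C h
end

section
/- For even n = 2k, the maximum size of a subspace code in F_q^n with minimum subspace distance n (over all dimensions) is q^k + 1, i.e., A_q(2k, 2k) = q^k + 1. -/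
open Module

/-- `Amdc K V d` is the maximum cardinality of a set of subspaces of `V` (of arbitrary
dimensions) with pairwise subspace distance at least `d` (a mixed dimension code). -/
noncomputable def Amdc (K V : Type*) [Field K] [AddCommGroup V] [Module K V]
    (d : ℕ) : ℕ :=
  sSup { m | ∃ C : Finset (Submodule K V),
    (∀ U ∈ C, ∀ W ∈ C, U ≠ W → d ≤ dS U W) ∧ C.card = m }

open Polynomial in
lemma finrank_splittingField_pow {K : Type*} [Field K] [Fintype K] {k : ℕ} (hk : k ≠ 0) :
    finrank K ((X ^ (Fintype.card K ^ k) - X : K[X]).SplittingField) = k := by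
  set q := Fintype.card K with hqdef
  set p := ringChar K with hpdef
  haveI : CharP K p := ringChar.charP K
  obtain ⟨m, hp, hq⟩ := FiniteField.card K p
  haveI := Fact.mk hp
  set g : K[X] := X ^ (q ^ k) - X with hg
  set L := g.SplittingField with hL
  haveI : Finite L := Module.finite_of_finite K
  haveI : Fintype L := Fintype.ofFinite L
  have hq1 : 1 < q := Fintype.one_lt_card
  have h1 : p ∣ q := by rw [hqdef, hq]; exact dvd_pow_self p m.pos.ne'
  have hpq : p ∣ q ^ k := h1.trans (dvd_pow_self q hk)
  have hsep : g.Separable := galois_poly_separable p (q ^ k) hpq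
  have hgne : g ≠ 0 := FiniteField.X_pow_card_pow_sub_X_ne_zero K hk hq1
  have key : Fintype.card (g.rootSet L) = q ^ k := by
    rw [card_rootSet_eq_natDegree hsep (SplittingField.splits g),
      FiniteField.X_pow_card_pow_sub_X_natDegree_eq K hk hq1]
  -- every element of L is a root
  haveI : CharP L p := charP_of_injective_algebraMap (algebraMap K L).injective p
  have hroot : ∀ x : L, x ^ (q ^ k) = x := by
    have hpow : (q : ℕ) ^ k = p ^ ((m : ℕ) * k) := by rw [hqdef, hq, ← pow_mul]
    intro x
    have hx : x ∈ Algebra.adjoin K (g.rootSet L) := by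
      rw [SplittingField.adjoin_rootSet]; trivial
    rw [Algebra.mem_adjoin_iff] at hx
    set S : Subring L := RingHom.eqLocus (iterateFrobenius L p (m * k)) (RingHom.id L) with hS
    have hmem : x ∈ S := by
      refine Subring.closure_le.mpr ?_ hx
      rintro y (⟨r, rfl⟩ | hy)
      · show iterateFrobenius L p (m * k) _ = _
        rw [iterateFrobenius_def, ← map_pow, ← hpow, FiniteField.pow_card_pow]
        rfl
      · show iterateFrobenius L p (m * k) _ = _
        rw [iterateFrobenius_def, ← hpow]
        have h2 := (mem_rootSet_of_ne hgne).mp hy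
        have h3 : y ^ q ^ k - y = 0 := by simpa [hg, sub_eq_zero] using h2
        exact sub_eq_zero.mp h3
    have : iterateFrobenius L p (m * k) x = x := hmem
    rwa [iterateFrobenius_def, ← hpow] at this
  have huniv : g.rootSet L = Set.univ := by
    rw [Set.eq_univ_iff_forall]
    intro x
    rw [mem_rootSet_of_ne hgne]
    simp only [hg, map_sub, map_pow, aeval_X, sub_eq_zero]
    exact hroot x
  simp_rw [huniv, ← Fintype.ofEquiv_card (Equiv.Set.univ _)] at key
  rw [@card_eq_pow_finrank K L _ _ _ _ (_)] at key
  exact Nat.pow_right_injective hq1 key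

lemma dS_map {K V V' : Type*} [Field K] [AddCommGroup V] [Module K V]
    [AddCommGroup V'] [Module K V'] (e : V ≃ₗ[K] V') (U W : Submodule K V) :
    dS (U.map (e : V →ₗ[K] V')) (W.map (e : V →ₗ[K] V')) = dS U W := by
  have hr : ∀ A : Submodule K V, finrank K ↥(A.map (e : V →ₗ[K] V')) = finrank K ↥A :=
    fun A => (Submodule.equivMapOfInjective _ e.injective A).symm.finrank_eq
  have hsup : (U.map (e : V →ₗ[K] V')) ⊔ (W.map (e : V →ₗ[K] V')) = (U ⊔ W).map (e : V →ₗ[K] V') :=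
    (Submodule.map_sup U W (e : V →ₗ[K] V')).symm
  have hinf : (U.map (e : V →ₗ[K] V')) ⊓ (W.map (e : V →ₗ[K] V')) = (U ⊓ W).map (e : V →ₗ[K] V') :=
    (Submodule.map_inf (e : V →ₗ[K] V') e.injective).symm
  rw [dS, dS, hsup, hinf, hr, hr]

lemma exists_code {K L : Type*} [Field K] [Fintype K] [Field L] [Algebra K L]
    [FiniteDimensional K L] {k : ℕ} (hk : 1 ≤ k) (hL : finrank K L = k) :
    ∃ C : Finset (Submodule K (L × L)),
      (∀ U ∈ C, ∀ W ∈ C, U ≠ W → 2 * k ≤ dS U W) ∧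
      C.card = Fintype.card K ^ k + 1 := by
  classical
  haveI : Finite L := Module.finite_of_finite K
  haveI : Fintype L := Fintype.ofFinite L
  set gr : L → Submodule K (L × L) := fun a => LinearMap.graph (LinearMap.mulLeft K a) with hgr
  set Uinf : Submodule K (L × L) := Submodule.prod ⊥ ⊤ with hUinf
  have hmemgr : ∀ (a : L) (z : L × L), z ∈ gr a ↔ z.2 = a * z.1 := by
    intro a z; simp [hgr, LinearMap.mem_graph_iff]
  have hmeminf : ∀ z : L × L, z ∈ Uinf ↔ z.1 = 0 := by
    intro z; simp [hUinf, Submodule.mem_prod]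
  -- pairwise complements
  have hcompl : ∀ U ∈ insert Uinf (Finset.image gr Finset.univ),
      ∀ W ∈ insert Uinf (Finset.image gr Finset.univ), U ≠ W →
      U ⊓ W = ⊥ ∧ U ⊔ W = ⊤ := by
    have hgrinf : ∀ a : L, gr a ⊓ Uinf = ⊥ ∧ gr a ⊔ Uinf = ⊤ := by
      intro a
      constructor
      · ext z
        simp only [Submodule.mem_inf, hmemgr, hmeminf, Submodule.mem_bot, Prod.ext_iff]
        constructor
        · rintro ⟨h2, h1⟩; exact ⟨h1, by simp [h2, h1]⟩
        · rintro ⟨h1, h2⟩; exact ⟨by simp [h1, h2], h1⟩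
      · rw [eq_top_iff]
        rintro ⟨u, v⟩ -
        rw [Submodule.mem_sup]
        exact ⟨(u, a * u), (hmemgr _ _).mpr rfl, (0, v - a * u), (hmeminf _).mpr rfl,
          by simp⟩
    have hgrgr : ∀ a b : L, a ≠ b → gr a ⊓ gr b = ⊥ ∧ gr a ⊔ gr b = ⊤ := by
      intro a b hab
      have hab' : a - b ≠ 0 := sub_ne_zero.mpr hab
      constructor
      · ext z
        simp only [Submodule.mem_inf, hmemgr, Submodule.mem_bot, Prod.ext_iff]
        constructor
        · rintro ⟨h1, h2⟩
          have : (a - b) * z.1 = 0 := by rw [sub_mul, ← h1, ← h2, sub_self]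
          have hz1 : z.1 = 0 := by
            rcases mul_eq_zero.mp this with h | h
            · exact absurd h hab'
            · exact h
          exact ⟨hz1, by simp [h1, hz1]⟩
        · rintro ⟨h1, h2⟩; constructor <;> simp [h1, h2]
      · rw [eq_top_iff]
        rintro ⟨u, v⟩ -
        rw [Submodule.mem_sup]
        refine ⟨((v - b * u) / (a - b), a * ((v - b * u) / (a - b))),
          (hmemgr _ _).mpr rfl,
          (u - (v - b * u) / (a - b), b * (u - (v - b * u) / (a - b))),
          (hmemgr _ _).mpr rfl, ?_⟩
        have hx : (a - b) * ((v - b * u) / (a - b)) = v - b * u := by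
          rw [mul_div_cancel₀ _ hab']
        rw [Prod.mk_add_mk, Prod.mk.injEq]
        refine ⟨by ring, ?_⟩
        field_simp
        ring
    intro U hU W hW hne
    simp only [Finset.mem_insert, Finset.mem_image, Finset.mem_univ, true_and] at hU hW
    rcases hU with rfl | ⟨a, rfl⟩
    · rcases hW with rfl | ⟨b, rfl⟩
      · exact absurd rfl hne
      · rw [inf_comm, sup_comm]; exact hgrinf b
    · rcases hW with rfl | ⟨b, rfl⟩
      · exact hgrinf a
      · exact hgrgr a b (fun h => hne (by rw [h]))
  -- distances
  have hfr : finrank K (L × L) = 2 * k := by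
    rw [Module.finrank_prod, hL, two_mul]
  refine ⟨insert Uinf (Finset.image gr Finset.univ), ?_, ?_⟩
  · intro U hU W hW hne
    obtain ⟨h1, h2⟩ := hcompl U hU W hW hne
    rw [dS, h1, h2, finrank_top, hfr, finrank_bot]
    simp
  · have hUinf_notmem : Uinf ∉ Finset.image gr Finset.univ := by
      simp only [Finset.mem_image, Finset.mem_univ, true_and, not_exists]
      intro a h
      have h1 : ((1 : L), a) ∈ gr a := (hmemgr _ _).mpr (by simp)
      rw [h] at h1
      have := (hmeminf _).mp h1
      exact one_ne_zero this
    have hinj : Function.Injective gr := by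
      intro a b hab
      have h1 : ((1 : L), a) ∈ gr a := (hmemgr _ _).mpr (by simp)
      rw [hab] at h1
      have := (hmemgr _ _).mp h1
      simpa using this
    rw [Finset.card_insert_of_notMem hUinf_notmem,
      Finset.card_image_of_injective _ hinj, Finset.card_univ,
      card_eq_pow_finrank (K := K) (V := L), hL]

lemma code_card_le {K : Type*} [Field K] [Fintype K] {k : ℕ} (hk : 1 ≤ k)
    (C : Finset (Submodule K (Fin (2 * k) → K)))
    (hC : ∀ U ∈ C, ∀ W ∈ C, U ≠ W → 2 * k ≤ dS U W) :
    C.card ≤ Fintype.card K ^ k + 1 := by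
  classical
  set q := Fintype.card K with hqdef
  have hq1 : 1 < q := Fintype.one_lt_card
  have ha1 : 1 < q ^ k := Nat.one_lt_pow (by omega) hq1
  by_cases h3 : C.card ≤ 2
  · omega
  push_neg at h3
  set V := (Fin (2 * k) → K) with hV
  have hfrV : finrank K V = 2 * k := Module.finrank_fin_fun K
  have hcompl : ∀ U ∈ C, ∀ W ∈ C, U ≠ W →
      U ⊓ W = ⊥ ∧ finrank K ↥U + finrank K ↥W = 2 * k := by
    intro U hU W hW hne
    have hd := hC U hU W hW hne
    have hsle : finrank K ↥(U ⊔ W) ≤ 2 * k := by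
      have := Submodule.finrank_le (U ⊔ W)
      rwa [Module.finrank_fin_fun] at this
    rw [dS] at hd
    have hinf0 : finrank K ↥(U ⊓ W) = 0 := by omega
    have hsup : finrank K ↥(U ⊔ W) = 2 * k := by omega
    have hbot : U ⊓ W = ⊥ := Submodule.finrank_eq_zero.mp hinf0
    have hsum := Submodule.finrank_sup_add_finrank_inf_eq U W
    rw [hinf0, hsup] at hsum
    exact ⟨hbot, by omega⟩
  have hdim : ∀ U ∈ C, finrank K ↥U = k := by
    intro U hU
    have h2 : 1 < (C.erase U).card := by
      rw [Finset.card_erase_of_mem hU]; omega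
    obtain ⟨W1, hW1, W2, hW2, hne⟩ := Finset.one_lt_card.mp h2
    have hW1' := Finset.mem_of_mem_erase hW1
    have hW2' := Finset.mem_of_mem_erase hW2
    have hU1 : U ≠ W1 := fun h => (Finset.ne_of_mem_erase hW1) h.symm
    have hU2 : U ≠ W2 := fun h => (Finset.ne_of_mem_erase hW2) h.symm
    have e1 := (hcompl U hU W1 hW1' hU1).2
    have e2 := (hcompl U hU W2 hW2' hU2).2
    have e3 := (hcompl W1 hW1' W2 hW2' hne).2
    omega
  -- counting
  set f : Submodule K V → Finset V := fun U => Set.toFinset ((U : Set V)) \ {0} with hf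
  have hfcard : ∀ U ∈ C, (f U).card = q ^ k - 1 := by
    intro U hU
    have h0 : (0 : V) ∈ Set.toFinset ((U : Set V)) := Set.mem_toFinset.mpr U.zero_mem
    have hsub : ({0} : Finset V) ⊆ Set.toFinset ((U : Set V)) := by
      simp [Finset.singleton_subset_iff, h0]
    rw [hf]
    rw [Finset.card_sdiff_of_subset hsub, Finset.card_singleton, Set.toFinset_card]
    rw [show Fintype.card ((U : Set V)) = Fintype.card ↥U from rfl]
    rw [card_eq_pow_finrank (K := K) (V := ↥U), hdim U hU]
  have hdisj : ∀ U ∈ C, ∀ W ∈ C, U ≠ W → Disjoint (f U) (f W) := by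
    intro U hU W hW hne
    rw [Finset.disjoint_left]
    intro x hxU hxW
    rw [hf, Finset.mem_sdiff, Set.mem_toFinset] at hxU hxW
    have : x ∈ U ⊓ W := ⟨hxU.1, hxW.1⟩
    rw [(hcompl U hU W hW hne).1, Submodule.mem_bot] at this
    exact hxU.2 (by simp [this])
  have hbu : (C.biUnion f).card = C.card * (q ^ k - 1) := by
    rw [Finset.card_biUnion hdisj]
    rw [Finset.sum_congr rfl hfcard, Finset.sum_const, smul_eq_mul]
  have hzero : (0 : V) ∉ C.biUnion f := by
    rw [Finset.mem_biUnion]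
    rintro ⟨U, hU, h0⟩
    simp [hf] at h0
  have hle : (C.biUnion f).card ≤ q ^ (2 * k) - 1 := by
    have hsub : C.biUnion f ⊆ Finset.univ \ {0} := by
      intro x hx
      rw [Finset.mem_sdiff]
      exact ⟨Finset.mem_univ x, by rintro h; rw [Finset.mem_singleton] at h; subst h; exact hzero hx⟩
    calc (C.biUnion f).card ≤ (Finset.univ \ {0} : Finset V).card := Finset.card_le_card hsub
      _ = q ^ (2 * k) - 1 := by
          rw [Finset.card_sdiff_of_subset (by simp), Finset.card_singleton, Finset.card_univ,
            card_eq_pow_finrank (K := K) (V := V), hfrV]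
  rw [hbu] at hle
  -- arithmetic
  have hpow : q ^ (2 * k) = q ^ k * q ^ k := by rw [two_mul, pow_add]
  rw [hpow] at hle
  obtain ⟨b, hb⟩ : ∃ b, q ^ k = b + 2 := ⟨q ^ k - 2, by omega⟩
  have hb1 : q ^ k - 1 = b + 1 := by omega
  rw [hb1, hb] at hle
  have e1 : (b + 2) * (b + 2) = (b + 3) * (b + 1) + 1 := by ring
  have key : C.card * (b + 1) ≤ (b + 3) * (b + 1) := by omega
  have hfin := Nat.le_of_mul_le_mul_right key (by omega : 0 < b + 1)
  omega


/-- For even `n = 2k`, `A_q(2k, 2k) = q^k + 1`. -/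
theorem Amdc_full_dist {K : Type*} [Field K] [Fintype K] {k : ℕ} (hk : 1 ≤ k) :
    Amdc K (Fin (2 * k) → K) (2 * k) = Fintype.card K ^ k + 1 := by
  classical
  set q := Fintype.card K with hqdef
  set S := { m | ∃ C : Finset (Submodule K (Fin (2 * k) → K)),
    (∀ U ∈ C, ∀ W ∈ C, U ≠ W → 2 * k ≤ dS U W) ∧ C.card = m } with hS
  have hub : ∀ m ∈ S, m ≤ q ^ k + 1 := by
    rintro m ⟨C, hC, rfl⟩
    exact code_card_le hk C hC
  have hmem : q ^ k + 1 ∈ S := by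
    set L := Polynomial.SplittingField
      ((Polynomial.X ^ (Fintype.card K ^ k) - Polynomial.X : Polynomial K)) with hLdef
    have hL : finrank K L = k := finrank_splittingField_pow (by omega)
    obtain ⟨C, hC, hCcard⟩ := exists_code (K := K) (L := L) hk hL
    have hfr : finrank K (L × L) = finrank K (Fin (2 * k) → K) := by
      rw [Module.finrank_prod, hL, Module.finrank_fin_fun, two_mul]
    obtain ⟨e⟩ := FiniteDimensional.nonempty_linearEquiv_of_finrank_eq hfr
    refine ⟨C.image (Submodule.map (e : (L × L) →ₗ[K] (Fin (2 * k) → K))), ?_, ?_⟩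
    · intro U' hU' W' hW' hne
      obtain ⟨U, hU, rfl⟩ := Finset.mem_image.mp hU'
      obtain ⟨W, hW, rfl⟩ := Finset.mem_image.mp hW'
      have hUW : U ≠ W := fun h => hne (by rw [h])
      rw [dS_map]
      exact hC U hU W hW hUW
    · have hinj : Function.Injective
          (Submodule.map (e : (L × L) →ₗ[K] (Fin (2 * k) → K))) :=
        Submodule.map_injective_of_injective e.injective
      rw [Finset.card_image_of_injective _ hinj, hCcard]
  show sSup S = q ^ k + 1
  exact le_antisymm (csSup_le ⟨_, hmem⟩ hub) (le_csSup ⟨_, hub⟩ hmem)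
end
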